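/- arXiv:2605.22165 — 3 statements merged into one kernel-verified Lean document; each statement's English description precedes it below -/
import Mathlib

section
/- Let 1 < q < 2 and let γ ≥ δ > 0 be reals. Then (q−1)·(δ^{2q} − γ^{2q}) + q·γ·δ·(γ^{2q−2} − δ^{2q−2}) ≤ 0. -/
theorem stmt_10 (q γ δ : ℝ) (hq1 : 1 < q) (hq2 : q < 2) (hδ : 0 < δ) (hγδ : δ ≤ γ) :
    (q - 1) * (δ ^ (2 * q) - γ ^ (2 * q)) +
      q * γ * δ * (γ ^ (2 * q - 2) - δ ^ (2 * q - 2)) ≤ 0 := by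
  have hγ : 0 < γ := lt_of_lt_of_le hδ hγδ
  set H : ℝ → ℝ := fun x => (q - 1) * δ ^ (2 * q) - (q - 1) * x ^ (2 * q)
      + q * δ * x ^ (2 * q - 1) - q * δ ^ (2 * q - 1) * x with hH
  set G : ℝ → ℝ := fun x => 0 - (q - 1) * ((2 * q) * x ^ (2 * q - 1))
      + q * δ * ((2 * q - 1) * x ^ (2 * q - 2)) - q * δ ^ (2 * q - 1) * 1 with hG
  set G2 : ℝ → ℝ := fun x => 0 - (q - 1) * ((2 * q) * ((2 * q - 1) * x ^ (2 * q - 2)))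
      + q * δ * ((2 * q - 1) * ((2 * q - 2) * x ^ (2 * q - 3))) - q * δ ^ (2 * q - 1) * 0
      with hG2
  -- derivative lemmas for rpow
  have d1 : ∀ x : ℝ, x ≠ 0 → HasDerivAt (fun x : ℝ => x ^ (2 * q))
      ((2 * q) * x ^ (2 * q - 1)) x := by
    intro x hx
    have h := Real.hasDerivAt_rpow_const (x := x) (p := 2 * q) (Or.inl hx)
    rw [show (2 * q) - 1 = 2 * q - 1 by ring] at h
    exact h
  have d2 : ∀ x : ℝ, x ≠ 0 → HasDerivAt (fun x : ℝ => x ^ (2 * q - 1))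
      ((2 * q - 1) * x ^ (2 * q - 2)) x := by
    intro x hx
    have h := Real.hasDerivAt_rpow_const (x := x) (p := 2 * q - 1) (Or.inl hx)
    rw [show (2 * q - 1) - 1 = 2 * q - 2 by ring] at h
    exact h
  have d3 : ∀ x : ℝ, x ≠ 0 → HasDerivAt (fun x : ℝ => x ^ (2 * q - 2))
      ((2 * q - 2) * x ^ (2 * q - 3)) x := by
    intro x hx
    have h := Real.hasDerivAt_rpow_const (x := x) (p := 2 * q - 2) (Or.inl hx)
    rw [show (2 * q - 2) - 1 = 2 * q - 3 by ring] at h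
    exact h
  have hHd : ∀ x : ℝ, x ≠ 0 → HasDerivAt H (G x) x := by
    intro x hx
    exact (((hasDerivAt_const x ((q - 1) * δ ^ (2 * q))).sub
        ((d1 x hx).const_mul (q - 1))).add
        ((d2 x hx).const_mul (q * δ))).sub
        ((hasDerivAt_id x).const_mul (q * δ ^ (2 * q - 1)))
  have hGd : ∀ x : ℝ, x ≠ 0 → HasDerivAt G (G2 x) x := by
    intro x hx
    exact (((hasDerivAt_const x (0 : ℝ)).sub
        (((d2 x hx).const_mul (2 * q)).const_mul (q - 1))).add
        (((d3 x hx).const_mul (2 * q - 1)).const_mul (q * δ))).sub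
        ((hasDerivAt_const x (1 : ℝ)).const_mul (q * δ ^ (2 * q - 1)))
  -- G is antitone on [δ, ∞)
  have hGanti : AntitoneOn G (Set.Ici δ) := by
    apply antitoneOn_of_deriv_nonpos (convex_Ici δ)
    · intro x hx
      exact (hGd x (ne_of_gt (lt_of_lt_of_le hδ hx))).continuousAt.continuousWithinAt
    · intro x hx
      rw [interior_Ici] at hx
      exact ((hGd x (ne_of_gt (lt_trans hδ hx))).differentiableAt).differentiableWithinAt
    · intro x hx
      rw [interior_Ici] at hx
      have hxδ : δ < x := hx
      have hx0 : 0 < x := lt_trans hδ hxδ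
      rw [(hGd x hx0.ne').deriv]
      have e2 : x ^ (2 * q - 2) = x ^ (2 * q - 3) * x := by
        rw [← Real.rpow_add_one hx0.ne' (2 * q - 3)]
        congr 1
        ring
      have A : (0 : ℝ) < x ^ (2 * q - 3) := Real.rpow_pos_of_pos hx0 _
      have key : 0 ≤ x ^ (2 * q - 3) * ((2 * q - 1) * (2 * q * (q - 1)) * (x - δ)) := by
        apply mul_nonneg A.le
        have h1 : (0 : ℝ) < 2 * q - 1 := by linarith
        have h2 : (0 : ℝ) < 2 * q * (q - 1) := by nlinarith
        have h3 : (0 : ℝ) ≤ x - δ := by linarith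
        positivity
      simp only [hG2]
      rw [e2]
      nlinarith [key]
  have e4 : δ ^ (2 * q - 1) = δ ^ (2 * q - 2) * δ := by
    rw [← Real.rpow_add_one hδ.ne' (2 * q - 2)]
    congr 1
    ring
  have hG0 : G δ = 0 := by
    simp only [hG]
    rw [e4]
    ring
  have hGle : ∀ x ∈ Set.Ici δ, G x ≤ 0 := by
    intro x hx
    have := hGanti (Set.self_mem_Ici) hx hx
    linarith [hG0 ▸ this]
  -- H is antitone on [δ, ∞)
  have hHanti : AntitoneOn H (Set.Ici δ) := by
    apply antitoneOn_of_deriv_nonpos (convex_Ici δ)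
    · intro x hx
      exact (hHd x (ne_of_gt (lt_of_lt_of_le hδ hx))).continuousAt.continuousWithinAt
    · intro x hx
      rw [interior_Ici] at hx
      exact ((hHd x (ne_of_gt (lt_trans hδ hx))).differentiableAt).differentiableWithinAt
    · intro x hx
      rw [interior_Ici] at hx
      rw [(hHd x (ne_of_gt (lt_trans hδ hx))).deriv]
      exact hGle x (Set.mem_Ici.mpr (le_of_lt hx))
  have hfin : H γ ≤ H δ := hHanti (Set.self_mem_Ici) hγδ hγδ
  have hHδ : H δ = 0 := by simp only [hH]; ring
  have e3 : γ ^ (2 * q - 1) = γ ^ (2 * q - 2) * γ := by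
    rw [← Real.rpow_add_one hγ.ne' (2 * q - 2)]
    congr 1
    ring
  have hEq : (q - 1) * (δ ^ (2 * q) - γ ^ (2 * q)) +
      q * γ * δ * (γ ^ (2 * q - 2) - δ ^ (2 * q - 2)) = H γ := by
    simp only [hH]
    rw [e3, e4]
    ring
  rw [hEq]
  linarith [hfin, hHδ]
end

section
/- Let 1/2 < α < 1 and let γ ≥ δ > 0 be reals. Then (α−1)·(γ^{2α} − δ^{2α}) − α·γ·δ·(γ^{2α−2} − δ^{2α−2}) ≤ 0. -/
open Real Set

theorem stmt_11 (α γ δ : ℝ) (hα1 : 1 / 2 < α) (hα2 : α < 1) (hδ : 0 < δ) (hγδ : δ ≤ γ) :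
    (α - 1) * (γ ^ (2 * α) - δ ^ (2 * α)) -
      α * γ * δ * (γ ^ (2 * α - 2) - δ ^ (2 * α - 2)) ≤ 0 := by
  have hγ : 0 < γ := lt_of_lt_of_le hδ hγδ
  -- F and G
  have hdF : ∀ x : ℝ, 0 < x → HasDerivAt
      (fun y : ℝ => (α - 1) * y ^ (2*α) - α * δ * y ^ (2*α - 1) + α * δ ^ (2*α - 1) * y)
      (2*α*(α-1) * x ^ (2*α - 1) - α*(2*α-1)*δ * x ^ (2*α - 2) + α * δ ^ (2*α - 1)) x := by
    intro x hx
    have h1 : HasDerivAt (fun y : ℝ => y ^ (2*α)) (2*α * x ^ (2*α - 1)) x :=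
      Real.hasDerivAt_rpow_const (Or.inl hx.ne')
    have h2 : HasDerivAt (fun y : ℝ => y ^ (2*α - 1)) ((2*α - 1) * x ^ (2*α - 2)) x := by
      have h := Real.hasDerivAt_rpow_const (p := 2*α - 1) (x := x) (Or.inl hx.ne')
      have : 2*α - 1 - 1 = 2*α - 2 := by ring
      rwa [this] at h
    have h3 : HasDerivAt (fun y : ℝ => α * δ ^ (2*α - 1) * y) (α * δ ^ (2*α - 1)) x := by
      simpa using (hasDerivAt_id x).const_mul (α * δ ^ (2*α - 1))
    have h := ((h1.const_mul (α - 1)).sub (h2.const_mul (α * δ))).add h3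
    exact h.congr_deriv (by ring)
  have hdG : ∀ x : ℝ, 0 < x → HasDerivAt
      (fun y : ℝ => 2*α*(α-1) * y ^ (2*α - 1) - α*(2*α-1)*δ * y ^ (2*α - 2) + α * δ ^ (2*α - 1))
      (2*α*(α-1)*(2*α-1) * x ^ (2*α - 2) - α*(2*α-1)*(2*α-2)*δ * x ^ (2*α - 3)) x := by
    intro x hx
    have h2 : HasDerivAt (fun y : ℝ => y ^ (2*α - 1)) ((2*α - 1) * x ^ (2*α - 2)) x := by
      have h := Real.hasDerivAt_rpow_const (p := 2*α - 1) (x := x) (Or.inl hx.ne')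
      have : 2*α - 1 - 1 = 2*α - 2 := by ring
      rwa [this] at h
    have h4 : HasDerivAt (fun y : ℝ => y ^ (2*α - 2)) ((2*α - 2) * x ^ (2*α - 3)) x := by
      have h := Real.hasDerivAt_rpow_const (p := 2*α - 2) (x := x) (Or.inl hx.ne')
      have : 2*α - 2 - 1 = 2*α - 3 := by ring
      rwa [this] at h
    have h := ((h2.const_mul (2*α*(α-1))).sub (h4.const_mul (α*(2*α-1)*δ))).add_const
      (α * δ ^ (2*α - 1))
    exact h.congr_deriv (by ring)
  -- G is antitone on Ici δ
  have hGanti : AntitoneOn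
      (fun y : ℝ => 2*α*(α-1) * y ^ (2*α - 1) - α*(2*α-1)*δ * y ^ (2*α - 2) + α * δ ^ (2*α - 1))
      (Ici δ) := by
    apply antitoneOn_of_hasDerivWithinAt_nonpos (convex_Ici δ)
      (f' := fun x => 2*α*(α-1)*(2*α-1) * x ^ (2*α - 2) - α*(2*α-1)*(2*α-2)*δ * x ^ (2*α - 3))
    · intro x hx
      exact (hdG x (hδ.trans_le hx)).continuousAt.continuousWithinAt
    · intro x hx
      exact (hdG x (hδ.trans (by simpa using hx))).hasDerivWithinAt
    · intro x hx
      rw [interior_Ici] at hx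
      have hxδ : δ < x := hx
      have hx0 : 0 < x := hδ.trans hxδ
      have e : x ^ (2*α - 2) = x * x ^ (2*α - 3) := by
        rw [← Real.rpow_one_add' hx0.le (show (1:ℝ) + (2*α-3) ≠ 0 by intro h; nlinarith)]
        ring_nf
      rw [e]
      have hx3 : (0:ℝ) < x ^ (2*α - 3) := Real.rpow_pos_of_pos hx0 _
      have hc : 0 < α*(2*α-1)*(2-2*α) := by
        apply mul_pos (mul_pos (by linarith) (by linarith)); linarith
      have hp := mul_pos hc (mul_pos hx3 (sub_pos.mpr hxδ))
      nlinarith [hp]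
  -- G δ = 0
  have hGδ : 2*α*(α-1) * δ ^ (2*α - 1) - α*(2*α-1)*δ * δ ^ (2*α - 2) + α * δ ^ (2*α - 1) = 0 := by
    have e : δ ^ (2*α - 1) = δ * δ ^ (2*α - 2) := by
      rw [← Real.rpow_one_add' hδ.le (show (1:ℝ) + (2*α-2) ≠ 0 by intro h; nlinarith)]
      ring_nf
    rw [e]; ring
  -- hence G ≤ 0 on Ici δ, so F is antitone on Ici δ
  have hFanti : AntitoneOn
      (fun y : ℝ => (α - 1) * y ^ (2*α) - α * δ * y ^ (2*α - 1) + α * δ ^ (2*α - 1) * y)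
      (Ici δ) := by
    apply antitoneOn_of_hasDerivWithinAt_nonpos (convex_Ici δ)
      (f' := fun x => 2*α*(α-1) * x ^ (2*α - 1) - α*(2*α-1)*δ * x ^ (2*α - 2) + α * δ ^ (2*α - 1))
    · intro x hx
      exact (hdF x (hδ.trans_le hx)).continuousAt.continuousWithinAt
    · intro x hx
      exact (hdF x (hδ.trans (by simpa using hx))).hasDerivWithinAt
    · intro x hx
      rw [interior_Ici] at hx
      have := hGanti (self_mem_Ici) (mem_Ici.mpr hx.le) hx.le
      simpa [hGδ] using this.trans_eq hGδ
  have key := hFanti (self_mem_Ici) (mem_Ici.mpr hγδ) hγδ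
  simp only at key
  -- rewrite target as F γ - F δ
  have e1 : γ ^ (2*α - 1) = γ * γ ^ (2*α - 2) := by
    rw [← Real.rpow_one_add' hγ.le (show (1:ℝ) + (2*α-2) ≠ 0 by intro h; nlinarith)]
    ring_nf
  have e2 : δ ^ (2*α - 1) = δ * δ ^ (2*α - 2) := by
    rw [← Real.rpow_one_add' hδ.le (show (1:ℝ) + (2*α-2) ≠ 0 by intro h; nlinarith)]
    ring_nf
  rw [e1, e2] at key
  nlinarith [key]
end

section
/- Let 1/2 < α < 1 and let γ ≥ δ > 0 be reals. Then (1−α)·(γ − δ)·δ^{2α} + α·δ²·γ·(γ^{2α−2} − δ^{2α−2}) ≤ 0. -/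
theorem stmt_13 (α γ δ : ℝ) (hα1 : 1 / 2 < α) (hα2 : α < 1) (hδ : 0 < δ) (hγδ : δ ≤ γ) :
    (1 - α) * (γ - δ) * δ ^ (2 * α) +
      α * δ ^ 2 * γ * (γ ^ (2 * α - 2) - δ ^ (2 * α - 2)) ≤ 0 := by
  have hγ : 0 < γ := lt_of_lt_of_le hδ hγδ
  set A := γ ^ (2 * α - 1) with hAdef
  set B := δ ^ (2 * α - 1) with hBdef
  have hApos : 0 < A := Real.rpow_pos_of_pos hγ _
  have hBpos : 0 < B := Real.rpow_pos_of_pos hδ _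
  have hA : γ ^ (2 * α - 2) = A / γ := by
    rw [hAdef, ← Real.rpow_sub_one hγ.ne']; ring_nf
  have hB : δ ^ (2 * α - 2) = B / δ := by
    rw [hBdef, ← Real.rpow_sub_one hδ.ne']; ring_nf
  have hD : δ ^ (2 * α) = B * δ := by
    rw [hBdef, ← Real.rpow_add_one hδ.ne']; ring_nf
  -- Bernoulli inequality
  have hs : (-1 : ℝ) ≤ γ / δ - 1 := by
    have : 1 ≤ γ / δ := (one_le_div hδ).mpr hγδ
    linarith
  have hp1 : (0 : ℝ) ≤ 2 * α - 1 := by linarith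
  have hp2 : (2 : ℝ) * α - 1 ≤ 1 := by linarith
  have key := rpow_one_add_le_one_add_mul_self hs hp1 hp2
  rw [add_sub_cancel] at key
  have hdiv : (γ / δ) ^ (2 * α - 1) = A / B := by
    rw [hAdef, hBdef, Real.div_rpow hγ.le hδ.le]
  rw [hdiv, div_le_iff₀ hBpos] at key
  -- key : A ≤ (1 + (2*α-1)*(γ/δ-1)) * B
  have hkey : A ≤ B + (2 * α - 1) * (γ - δ) / δ * B := by
    have : (1 + (2 * α - 1) * (γ / δ - 1)) * B = B + (2 * α - 1) * (γ - δ) / δ * B := by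
      field_simp
    linarith [this ▸ key]
  rw [hA, hB, hD]
  have h1 : 0 ≤ γ - δ := by linarith
  have expand : (1 - α) * (γ - δ) * (B * δ) + α * δ ^ 2 * γ * (A / γ - B / δ)
      = (1 - α) * (γ - δ) * B * δ + α * δ ^ 2 * A - α * δ * γ * B := by
    field_simp; ring
  rw [expand]
  have hkey2 : α * δ ^ 2 * A ≤ α * δ ^ 2 * B + α * (2 * α - 1) * (γ - δ) * δ * B := by
    have h2 : α * δ ^ 2 * A ≤ α * δ ^ 2 * (B + (2 * α - 1) * (γ - δ) / δ * B) := by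
      apply mul_le_mul_of_nonneg_left hkey
      positivity
    have h3 : α * δ ^ 2 * (B + (2 * α - 1) * (γ - δ) / δ * B)
        = α * δ ^ 2 * B + α * (2 * α - 1) * (γ - δ) * δ * B := by
      field_simp
    linarith [h3 ▸ h2]
  nlinarith [mul_pos hδ hBpos, mul_nonneg (mul_nonneg h1 hδ.le) hBpos.le,
    mul_nonneg (mul_nonneg (mul_nonneg (by linarith : (0:ℝ) ≤ 1 - α) (by linarith : (0:ℝ) ≤ 2*α - 1)) h1) (mul_nonneg hδ.le hBpos.le)]
end
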